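/- For any subset A of ℝ, if the Hattori space (ℝ, τ_A) is σ-compact, then ℝ\A is countable and nowhere dense in (ℝ, τ_A). -/

import Mathlib

/-!
The Hattori topology `τ_A` is finer than the Euclidean one, so a `τ_A`-compact set `K` is
compact, hence closed, in `ℝ`. At a point `x ∉ A` the set `Iio x` is `τ_A`-closed, so
`K ∩ Iio x` is compact as well and stays away from `x`: `K` misses an interval `(a, x)`.
Points with such a left gap are countable, so `K \ A` is countable, and `K` has no Euclidean
interior point outside `A`. Writing `ℝ` as a countable union of `τ_A`-compact sets, the first
fact makes `ℝ \ A` countable, and the Baire category theorem makes the Euclidean interior of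
`A` dense. Every nonempty `τ_A`-open set contains a nonempty open interval, so that interior
is also `τ_A`-open and `τ_A`-dense, and `ℝ \ A` lies in its closed, nowhere dense complement.
-/

open Set

/-- The Hattori topology on ℝ: points of `A` have Euclidean neighborhood base
`(x-ε, x+ε)`, points outside `A` have Sorgenfrey neighborhood base `[x, x+ε)`. -/
def hattori (A : Set ℝ) : TopologicalSpace ℝ where
  IsOpen U := ∀ x ∈ U, ∃ ε > (0 : ℝ),
    (x ∈ A → Ioo (x - ε) (x + ε) ⊆ U) ∧ (x ∉ A → Ico x (x + ε) ⊆ U)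
  isOpen_univ := fun x _ => ⟨1, one_pos, fun _ => subset_univ _, fun _ => subset_univ _⟩
  isOpen_inter := by
    intro U V hU hV x hx
    obtain ⟨ε₁, hε₁, h₁, h₁'⟩ := hU x hx.1
    obtain ⟨ε₂, hε₂, h₂, h₂'⟩ := hV x hx.2
    have l1 := min_le_left ε₁ ε₂
    have l2 := min_le_right ε₁ ε₂
    refine ⟨min ε₁ ε₂, lt_min hε₁ hε₂, fun hA => ?_, fun hA => ?_⟩
    · intro y hy
      exact ⟨h₁ hA ⟨by linarith [hy.1], by linarith [hy.2]⟩,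
             h₂ hA ⟨by linarith [hy.1], by linarith [hy.2]⟩⟩
    · intro y hy
      exact ⟨h₁' hA ⟨hy.1, by linarith [hy.2]⟩, h₂' hA ⟨hy.1, by linarith [hy.2]⟩⟩
  isOpen_sUnion := by
    intro S hS x hx
    obtain ⟨U, hU, hxU⟩ := hx
    obtain ⟨ε, hε, h, h'⟩ := hS U hU x hxU
    exact ⟨ε, hε, fun hA => (h hA).trans (subset_sUnion_of_mem hU),
      fun hA => (h' hA).trans (subset_sUnion_of_mem hU)⟩

/-- The Sorgenfrey (lower limit) topology on ℝ. -/
def sorgenfrey : TopologicalSpace ℝ :=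
  TopologicalSpace.generateFrom {S | ∃ a b : ℝ, S = Ico a b}

open Topology

theorem countable_of_forall_exists_disjoint_Ioo {α : Type*} [LinearOrder α] [DenselyOrdered α]
    [TopologicalSpace α] [OrderTopology α] [TopologicalSpace.SeparableSpace α] {s : Set α}
    (h : ∀ x ∈ s, ∃ a < x, Disjoint s (Ioo a x)) : s.Countable := by
  choose! a ha hdisj using h
  have key : ∀ x ∈ s, ∀ y ∈ s, x < y → Disjoint (Ioo (a x) x) (Ioo (a y) y) := by
    intro x hx y hy hxy
    have hxa : x ≤ a y := by
      by_contra! hlt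
      exact disjoint_left.1 (hdisj y hy) hx ⟨hlt, hxy⟩
    exact disjoint_left.2 fun z hzx hzy => (hzx.2.trans_le hxa).not_gt hzy.1
  refine Set.PairwiseDisjoint.countable_of_isOpen (s := fun x => Ioo (a x) x) ?_
    (fun _ _ => isOpen_Ioo) (fun x hx => nonempty_Ioo.2 (ha x hx))
  intro x hx y hy hne
  rcases hne.lt_or_gt with hlt | hlt
  · exact key x hx y hy hlt
  · exact (key y hy x hx hlt).symm

section Hattori

variable {A K : Set ℝ}

theorem hattori_le (A : Set ℝ) : hattori A ≤ (inferInstance : TopologicalSpace ℝ) := by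
  intro U hU x hx
  obtain ⟨ε, hε, hball⟩ := Metric.isOpen_iff.1 hU x hx
  rw [Real.ball_eq_Ioo] at hball
  exact ⟨ε, hε, fun _ => hball, fun _ => (Ico_subset_Ioo_left (by linarith)).trans hball⟩

theorem isOpen_hattori_of_isOpen {U : Set ℝ} (hU : IsOpen U) : IsOpen[hattori A] U :=
  hattori_le A U hU

theorem IsCompact.of_hattori (hK : @IsCompact ℝ (hattori A) K) : IsCompact K := by
  simpa using @IsCompact.image ℝ ℝ (hattori A) _ K id hK (continuous_id_of_le (hattori_le A))

theorem exists_Ico_subset_of_isOpen_hattori {U : Set ℝ} (hU : IsOpen[hattori A] U) {x : ℝ}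
    (hx : x ∈ U) : ∃ ε > 0, Ico x (x + ε) ⊆ U := by
  obtain ⟨ε, hε, hmem, hnmem⟩ := hU x hx
  refine ⟨ε, hε, ?_⟩
  by_cases hxA : x ∈ A
  · exact (Ico_subset_Ioo_left (by linarith)).trans (hmem hxA)
  · exact hnmem hxA

theorem isOpen_hattori_Ici {x : ℝ} (hx : x ∉ A) : IsOpen[hattori A] (Ici x) := by
  intro y hy
  rcases (mem_Ici.1 hy).eq_or_lt with rfl | hlt
  · exact ⟨1, one_pos, fun h => absurd h hx, fun _ => Ico_subset_Ici_self⟩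
  · refine ⟨y - x, sub_pos.2 hlt, fun _ z hz => ?_, fun _ => ?_⟩
    · exact mem_Ici.2 (by linarith [hz.1])
    · exact Ico_subset_Ici_self.trans (Ici_subset_Ici.2 hlt.le)

theorem exists_disjoint_Ioo_of_isCompact_hattori (hK : @IsCompact ℝ (hattori A) K) {x : ℝ}
    (hx : x ∉ A) : ∃ a < x, Disjoint K (Ioo a x) := by
  have hIio : IsClosed[hattori A] (Iio x) := by
    rw [← @isOpen_compl_iff, compl_Iio]
    exact isOpen_hattori_Ici hx
  have hclosed : IsClosed (K ∩ Iio x) :=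
    (@IsCompact.inter_right ℝ (hattori A) K _ hK hIio).of_hattori.isClosed
  have hnhds : (K ∩ Iio x)ᶜ ∈ 𝓝 x :=
    hclosed.isOpen_compl.mem_nhds fun hmem => lt_irrefl x hmem.2
  obtain ⟨a, hax, hIoc⟩ := exists_Ioc_subset_of_mem_nhds hnhds ⟨x - 1, by linarith⟩
  exact ⟨a, hax, disjoint_left.2 fun y hyK hy => hIoc (Ioo_subset_Ioc_self hy) ⟨hyK, hy.2⟩⟩

theorem countable_diff_of_isCompact_hattori (hK : @IsCompact ℝ (hattori A) K) :
    (K \ A).Countable := by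
  refine countable_of_forall_exists_disjoint_Ioo fun x hx => ?_
  obtain ⟨a, hax, hdisj⟩ := exists_disjoint_Ioo_of_isCompact_hattori hK hx.2
  exact ⟨a, hax, hdisj.mono_left sdiff_subset⟩

theorem interior_subset_of_isCompact_hattori (hK : @IsCompact ℝ (hattori A) K) :
    interior K ⊆ A := by
  intro x hx
  by_contra hxA
  obtain ⟨a, hax, hdisj⟩ := exists_disjoint_Ioo_of_isCompact_hattori hK hxA
  obtain ⟨b, hbx, hIoc⟩ := exists_Ioc_subset_of_mem_nhds (isOpen_interior.mem_nhds hx) ⟨a, hax⟩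
  obtain ⟨y, hy, hyx⟩ := nonempty_Ioo.2 (max_lt hax hbx)
  rw [max_lt_iff] at hy
  exact disjoint_left.1 hdisj (interior_subset (hIoc ⟨hy.2, hyx.le⟩)) ⟨hy.1, hyx⟩

theorem countable_compl_of_sigmaCompactSpace_hattori (h : @SigmaCompactSpace ℝ (hattori A)) :
    Aᶜ.Countable := by
  have hcover : Aᶜ ⊆ ⋃ n, @compactCovering ℝ (hattori A) h n \ A := by
    intro x hx
    obtain ⟨n, hn⟩ := mem_iUnion.1 ((@iUnion_compactCovering ℝ (hattori A) h).ge (mem_univ x))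
    exact mem_iUnion.2 ⟨n, hn, hx⟩
  exact (countable_iUnion fun n =>
    countable_diff_of_isCompact_hattori (@isCompact_compactCovering ℝ (hattori A) h n)).mono hcover

theorem dense_interior_of_sigmaCompactSpace_hattori (h : @SigmaCompactSpace ℝ (hattori A)) :
    Dense (interior A) := by
  have hcompact := @isCompact_compactCovering ℝ (hattori A) h
  refine (dense_iUnion_interior_of_closed (fun n => (hcompact n).of_hattori.isClosed)
    (@iUnion_compactCovering ℝ (hattori A) h)).mono (iUnion_subset fun n => ?_)
  exact interior_maximal (interior_subset_of_isCompact_hattori (hcompact n)) isOpen_interior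

theorem dense_hattori_of_dense {D : Set ℝ} (hD : Dense D) : @Dense ℝ (hattori A) D := by
  refine @dense_iff_inter_open ℝ (hattori A) D |>.2 fun U hU ⟨x, hx⟩ => ?_
  obtain ⟨ε, hε, hIco⟩ := exists_Ico_subset_of_isOpen_hattori hU hx
  obtain ⟨y, hyU, hyD⟩ :=
    hD.inter_open_nonempty _ isOpen_Ioo (nonempty_Ioo.2 (lt_add_of_pos_right x hε))
  exact ⟨y, hIco (Ioo_subset_Ico_self hyU), hyD⟩

theorem isNowhereDense_hattori_compl (hA : Dense (interior A)) :
    @IsNowhereDense ℝ (hattori A) Aᶜ := by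
  have hnd : @IsNowhereDense ℝ (hattori A) (interior A)ᶜ :=
    ((@isClosed_isNowhereDense_iff_compl ℝ (hattori A) _).2 <| by
      rw [compl_compl]
      exact ⟨isOpen_hattori_of_isOpen isOpen_interior, dense_hattori_of_dense hA⟩).2
  exact @IsNowhereDense.mono ℝ (hattori A) _ _ (compl_subset_compl.2 interior_subset) hnd

end Hattori

theorem stmt13 (A : Set ℝ) (h : @SigmaCompactSpace ℝ (hattori A)) :
    Aᶜ.Countable ∧ @interior ℝ (hattori A) (@closure ℝ (hattori A) Aᶜ) = ∅ :=
  ⟨countable_compl_of_sigmaCompactSpace_hattori h,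
    isNowhereDense_hattori_compl (dense_interior_of_sigmaCompactSpace_hattori h)⟩
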